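/- arXiv:0809.3575 — 11 statements merged into one kernel-verified Lean document; each statement's English description precedes it below -/
import Mathlib

section
/- Let 𝒜 be an abelian category, let a : A₁ → A₀, b : B₁ → B₀ and b' : B'₁ → B'₀ be objects of the arrow 2-category 𝒜^[1] with A₀ projective, and let w : b → b' be a morphism in 𝒜^[1] such that the induced morphisms ker b → ker b' and coker b → coker b' are isomorphisms. Then post-composition with w induces a bijection from the set of homotopy classes of morphisms a → b to the set of homotopy classes of morphisms a → b', and for every morphism (f₀,f₁) : a → b, composition with w₁ : B₁ → B'₁ gives a bijection from the set of self-homotopies of (f₀,f₁) to the set of self-homotopies of w ∘ (f₀,f₁). -/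
open CategoryTheory CategoryTheory.Limits

universe v u

/-- A morphism in the arrow (2-)category `𝒜^[1]` from `a : A₁ ⟶ A₀` to `b : B₁ ⟶ B₀`:
a pair `(f₀, f₁)` with `f₀ ∘ a = b ∘ f₁`. -/
structure ArrowMor {C : Type u} [Category.{v} C] {A₁ A₀ B₁ B₀ : C}
    (a : A₁ ⟶ A₀) (b : B₁ ⟶ B₀) where
  f₀ : A₀ ⟶ B₀
  f₁ : A₁ ⟶ B₁
  comm : a ≫ f₀ = f₁ ≫ b

namespace ArrowMor

variable {C : Type u} [Category.{v} C] {A₁ A₀ B₁ B₀ D₁ D₀ : C}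
  {a : A₁ ⟶ A₀} {b : B₁ ⟶ B₀} {d : D₁ ⟶ D₀}

theorem ext' {f g : ArrowMor a b} (h0 : f.f₀ = g.f₀) (h1 : f.f₁ = g.f₁) : f = g := by
  cases f; cases g; simp_all

/-- The identity morphism of an arrow. -/
def id (a : A₁ ⟶ A₀) : ArrowMor a a := ⟨𝟙 _, 𝟙 _, by simp⟩

/-- (Diagrammatic order) composition of morphisms of arrows. -/
def comp (f : ArrowMor a b) (g : ArrowMor b d) : ArrowMor a d :=
  ⟨f.f₀ ≫ g.f₀, f.f₁ ≫ g.f₁, by rw [← Category.assoc, f.comm, Category.assoc, g.comm,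
    Category.assoc]⟩

end ArrowMor

section Htpy

variable {C : Type u} [Category.{v} C] [Preadditive C] {A₁ A₀ B₁ B₀ : C}
  {a : A₁ ⟶ A₀} {b : B₁ ⟶ B₀}

/-- `α : A₀ ⟶ B₁` is a homotopy from `(f₀,f₁)` to `(g₀,g₁)` if `f₁ - g₁ = α ∘ a`
and `f₀ - g₀ = b ∘ α`. -/
def IsHomotopy (f g : ArrowMor a b) (α : A₀ ⟶ B₁) : Prop :=
  f.f₁ - g.f₁ = a ≫ α ∧ f.f₀ - g.f₀ = α ≫ b

/-- Two morphisms of arrows are homotopic if there is a homotopy between them. -/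
def Homotopic (a : A₁ ⟶ A₀) (b : B₁ ⟶ B₀) (f g : ArrowMor a b) : Prop :=
  ∃ α : A₀ ⟶ B₁, IsHomotopy f g α

theorem Homotopic.refl (f : ArrowMor a b) : Homotopic a b f f :=
  ⟨0, by simp [IsHomotopy]⟩

theorem Homotopic.symm {f g : ArrowMor a b} (h : Homotopic a b f g) : Homotopic a b g f := by
  obtain ⟨α, h₁, h₀⟩ := h
  refine ⟨-α, ?_, ?_⟩
  · rw [Preadditive.comp_neg, ← h₁, neg_sub]
  · rw [Preadditive.neg_comp, ← h₀, neg_sub]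

theorem Homotopic.trans {f g h : ArrowMor a b} (h₁ : Homotopic a b f g)
    (h₂ : Homotopic a b g h) : Homotopic a b f h := by
  obtain ⟨α, hα₁, hα₀⟩ := h₁
  obtain ⟨β, hβ₁, hβ₀⟩ := h₂
  refine ⟨α + β, ?_, ?_⟩
  · rw [Preadditive.comp_add, ← hα₁, ← hβ₁]; abel
  · rw [Preadditive.add_comp, ← hα₀, ← hβ₀]; abel

/-- Homotopy of morphisms of arrows is an equivalence relation. -/
def homSetoid (a : A₁ ⟶ A₀) (b : B₁ ⟶ B₀) : Setoid (ArrowMor a b) :=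
  ⟨Homotopic a b, ⟨Homotopic.refl, Homotopic.symm, Homotopic.trans⟩⟩

theorem Homotopic.comp_right {D₁ D₀ : C} {d : D₁ ⟶ D₀} {f g : ArrowMor a b}
    (h : Homotopic a b f g) (w : ArrowMor b d) :
    Homotopic a d (f.comp w) (g.comp w) := by
  obtain ⟨α, h₁, h₀⟩ := h
  refine ⟨α ≫ w.f₁, ?_, ?_⟩
  · rw [ArrowMor.comp, ArrowMor.comp, ← Preadditive.sub_comp, h₁, Category.assoc]
  · rw [ArrowMor.comp, ArrowMor.comp, ← Preadditive.sub_comp, h₀, Category.assoc,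
      Category.assoc, w.comm]

theorem Homotopic.comp_left {D₁ D₀ : C} {d : D₁ ⟶ D₀} {f g : ArrowMor b d}
    (h : Homotopic b d f g) (w : ArrowMor a b) :
    Homotopic a d (w.comp f) (w.comp g) := by
  obtain ⟨α, h₁, h₀⟩ := h
  refine ⟨w.f₀ ≫ α, ?_, ?_⟩
  · rw [ArrowMor.comp, ArrowMor.comp, ← Preadditive.comp_sub, h₁, ← Category.assoc,
      ← Category.assoc, w.comm]
  · rw [ArrowMor.comp, ArrowMor.comp, ← Preadditive.comp_sub, h₀, Category.assoc]

end Htpy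

section KerCoker

variable {C : Type u} [Category.{v} C] [Abelian C] {A₁ A₀ B₁ B₀ : C}
  {a : A₁ ⟶ A₀} {b : B₁ ⟶ B₀}

/-- The induced morphism `ker a ⟶ ker b`. -/
noncomputable abbrev ArrowMor.kerMap (f : ArrowMor a b) : kernel a ⟶ kernel b :=
  kernel.map a b f.f₁ f.f₀ f.comm

/-- The induced morphism `coker a ⟶ coker b`. -/
noncomputable abbrev ArrowMor.cokerMap (f : ArrowMor a b) : cokernel a ⟶ cokernel b :=
  cokernel.map a b f.f₁ f.f₀ f.comm

end KerCoker

variable {C : Type u} [Category.{v} C] [Abelian C]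

/-! Since `ker w` is an isomorphism and `coker w` a monomorphism, the square formed by `b`,
`w₁`, `w₀`, `b'` is a pullback. Hence a homotopy `α'` between `f ≫ w` and `g ≫ w` is `α ≫ w₁`
for the unique `α` with `α ≫ b = f₀ - g₀`, which is a homotopy between `f` and `g`; the same
lifting handles self-homotopies. For surjectivity on homotopy classes, `coker w` being epi and
`A₀` projective give `g₀ = f₀ ≫ w₀ + β ≫ b'`, and then `f₁` is the pullback lift of
`(a ≫ f₀, g₁ - a ≫ β)`, with `-β` a homotopy. -/

namespace CategoryTheory.CommSq

variable {X₁ X₂ X₃ X₄ : C} {t : X₁ ⟶ X₂} {l : X₁ ⟶ X₃} {r : X₂ ⟶ X₄} {b : X₃ ⟶ X₄}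

theorem mono_pullback_lift_of_mono_kernel_map (sq : CommSq t l r b)
    [Mono (kernel.map t b l r sq.w)] : Mono (pullback.lift t l sq.w) := by
  rw [Preadditive.mono_iff_cancel_zero]
  intro T z hz
  have ht : z ≫ t = 0 := by
    simpa only [Category.assoc, pullback.lift_fst, zero_comp] using hz =≫ pullback.fst r b
  have hl : z ≫ l = 0 := by
    simpa only [Category.assoc, pullback.lift_snd, zero_comp] using hz =≫ pullback.snd r b
  have hk : kernel.lift t z ht = 0 := by
    rw [← cancel_mono (kernel.map t b l r sq.w), zero_comp]
    ext
    simp [hl]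
  rw [← kernel.lift_ι t z ht, hk, zero_comp]

theorem epi_pullback_lift_of_epi_kernel_map_of_mono_cokernel_map (sq : CommSq t l r b)
    [Epi (kernel.map t b l r sq.w)] [Mono (cokernel.map t b l r sq.w)] :
    Epi (pullback.lift t l sq.w) := by
  rw [epi_iff_surjective_up_to_refinements]
  intro A x
  set u := x ≫ pullback.fst r b
  set v := x ≫ pullback.snd r b
  have huv : u ≫ r = v ≫ b := by simp [u, v, pullback.condition]
  have hu : u ≫ cokernel.π t = 0 := by
    rw [← cancel_mono (cokernel.map t b l r sq.w)]
    simp [reassoc_of% huv]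
  have ht := ShortComplex.exact_of_g_is_cokernel
    (ShortComplex.mk _ _ (cokernel.condition t)) (cokernelIsCokernel t)
  obtain ⟨A₁, π₁, _, y, hy⟩ := ht.exact_up_to_refinements u hu
  dsimp at hy
  have hk : (π₁ ≫ v - y ≫ l) ≫ b = 0 := by
    rw [Preadditive.sub_comp, Category.assoc, ← huv, ← Category.assoc, hy, Category.assoc,
      Category.assoc, sq.w, sub_self]
  obtain ⟨A₂, π₂, _, k, hk'⟩ :=
    surjective_up_to_refinements_of_epi (kernel.map t b l r sq.w) (kernel.lift b _ hk)
  refine ⟨A₂, π₂ ≫ π₁, inferInstance, π₂ ≫ y + k ≫ kernel.ι t, ?_⟩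
  apply pullback.hom_ext
  · simp only [Category.assoc, Preadditive.add_comp, pullback.lift_fst, kernel.condition,
      comp_zero, add_zero, ← hy]
    rfl
  · have hkl := hk' =≫ kernel.ι b
    simp only [Category.assoc, kernel.lift_ι] at hkl
    simp only [Category.assoc, Preadditive.add_comp, pullback.lift_snd, ← hkl]
    rw [Preadditive.comp_sub, add_sub_cancel]

theorem isPullback_of_isIso_kernel_map_of_mono_cokernel_map (sq : CommSq t l r b)
    [IsIso (kernel.map t b l r sq.w)] [Mono (cokernel.map t b l r sq.w)] :
    IsPullback t l r b := by
  have := sq.mono_pullback_lift_of_mono_kernel_map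
  have := sq.epi_pullback_lift_of_epi_kernel_map_of_mono_cokernel_map
  have := isIso_of_mono_of_epi (pullback.lift t l sq.w)
  exact IsPullback.of_iso_pullback sq (asIso (pullback.lift t l sq.w)) (pullback.lift_fst _ _ _)
    (pullback.lift_snd _ _ _)

theorem exists_eq_comp_add_comp_of_epi_cokernel_map (sq : CommSq t l r b)
    [Epi (cokernel.map t b l r sq.w)] {P : C} [Projective P] (x : P ⟶ X₄) :
    ∃ (x₂ : P ⟶ X₂) (x₃ : P ⟶ X₃), x₂ ≫ r + x₃ ≫ b = x := by
  set c := Projective.factorThru (x ≫ cokernel.π b) (cokernel.map t b l r sq.w)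
  set x₂ := Projective.factorThru c (cokernel.π t)
  have hx : (x - x₂ ≫ r) ≫ cokernel.π b = 0 := by
    have hc : c ≫ cokernel.map t b l r sq.w = x ≫ cokernel.π b := Projective.factorThru_comp _ _
    have hx₂ : x₂ ≫ cokernel.π t = c := Projective.factorThru_comp _ _
    have hπ : cokernel.π t ≫ cokernel.map t b l r sq.w = r ≫ cokernel.π b :=
      cokernel.π_desc _ _ _
    rw [Preadditive.sub_comp, Category.assoc, ← hπ, ← Category.assoc, hx₂, hc, sub_self]
  have hb := ShortComplex.exact_of_g_is_cokernel
    (ShortComplex.mk _ _ (cokernel.condition b)) (cokernelIsCokernel b)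
  exact ⟨x₂, hb.liftFromProjective _ hx, by rw [hb.liftFromProjective_comp, add_sub_cancel]⟩

end CategoryTheory.CommSq

section Postcomp

variable {A₁ A₀ B₁ B₀ B'₁ B'₀ : C} {a : A₁ ⟶ A₀} {b : B₁ ⟶ B₀} {b' : B'₁ ⟶ B'₀}
  {w : ArrowMor b b'}

theorem Homotopic.of_comp_right (hw : IsPullback b w.f₁ w.f₀ b') {f g : ArrowMor a b}
    (h : Homotopic a b' (f.comp w) (g.comp w)) : Homotopic a b f g := by
  obtain ⟨α', h₁, h₀⟩ := h
  simp only [ArrowMor.comp, ← Preadditive.sub_comp] at h₁ h₀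
  refine ⟨hw.lift (f.f₀ - g.f₀) α' h₀, hw.hom_ext ?_ ?_, (hw.lift_fst _ _ _).symm⟩
  · rw [Category.assoc, hw.lift_fst, Preadditive.sub_comp, Preadditive.comp_sub, f.comm, g.comm]
  · rw [Category.assoc, hw.lift_snd, h₁]

theorem exists_comp_homotopic [Projective A₀] (hw : IsPullback b w.f₁ w.f₀ b')
    [Epi w.cokerMap] (g : ArrowMor a b') : ∃ f : ArrowMor a b, Homotopic a b' (f.comp w) g := by
  obtain ⟨f₀, β, hβ⟩ :=
    CommSq.exists_eq_comp_add_comp_of_epi_cokernel_map ⟨w.comm⟩ g.f₀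
  have hf₁ : (a ≫ f₀) ≫ w.f₀ = (g.f₁ - a ≫ β) ≫ b' := by
    rw [Category.assoc, ← sub_eq_iff_eq_add.2 hβ.symm, Preadditive.comp_sub, Preadditive.sub_comp,
      g.comm, Category.assoc]
  refine ⟨⟨f₀, hw.lift _ _ hf₁, (hw.lift_fst _ _ _).symm⟩, -β, ?_, ?_⟩
  · simp [ArrowMor.comp]
  · simp [ArrowMor.comp, ← hβ]

end Postcomp

/-- Let `𝒜` be abelian, `a : A₁ ⟶ A₀` with `A₀` projective, and
`w : b ⟶ b'` a morphism of `𝒜^[1]` inducing isomorphisms on kernels and cokernels.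
Then post-composition with `w` is a bijection on homotopy classes of morphisms
`a ⟶ b` → `a ⟶ b'`, and for every morphism `f : a ⟶ b`, composition with `w₁`
is a bijection from the self-homotopies of `f` to the self-homotopies of `w ∘ f`. -/
theorem bijective_postcomp_of_isIso_kerMap_cokerMap {A₁ A₀ B₁ B₀ B'₁ B'₀ : C}
    (a : A₁ ⟶ A₀) (b : B₁ ⟶ B₀) (b' : B'₁ ⟶ B'₀) [Projective A₀]
    (w : ArrowMor b b') (hker : IsIso w.kerMap) (hcoker : IsIso w.cokerMap) :
    Function.Bijective
      (Quot.map (fun f : ArrowMor a b => f.comp w)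
        (fun _ _ hfg => hfg.comp_right w) :
          Quot (Homotopic a b) → Quot (Homotopic a b')) ∧
    ∀ _f : ArrowMor a b,
      Function.Bijective
        (fun α : {α : A₀ ⟶ B₁ // a ≫ α = 0 ∧ α ≫ b = 0} =>
          (⟨α.1 ≫ w.f₁,
            by rw [← Category.assoc, α.2.1, zero_comp],
            by rw [Category.assoc, ← w.comm, ← Category.assoc, α.2.2, zero_comp]⟩ :
            {β : A₀ ⟶ B'₁ // a ≫ β = 0 ∧ β ≫ b' = 0})) := by
  have hw : IsPullback b w.f₁ w.f₀ b' :=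
    CommSq.isPullback_of_isIso_kernel_map_of_mono_cokernel_map ⟨w.comm⟩
  refine ⟨⟨?_, ?_⟩, fun _ => ⟨?_, ?_⟩⟩
  · rintro ⟨f⟩ ⟨g⟩ h
    exact Quot.sound (Homotopic.of_comp_right hw
      ((homSetoid a b').iseqv.eqvGen_iff.1 (Quot.eqvGen_exact h)))
  · rintro ⟨g⟩
    obtain ⟨f, hf⟩ := exists_comp_homotopic hw g
    exact ⟨Quot.mk _ f, Quot.sound hf⟩
  · intro α α' h
    exact Subtype.ext (hw.hom_ext (α.2.2.trans α'.2.2.symm) (congrArg Subtype.val h))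
  · intro β
    have hβ : (0 : A₀ ⟶ B₀) ≫ w.f₀ = β.1 ≫ b' := by rw [zero_comp, β.2.2]
    refine ⟨⟨hw.lift 0 β.1 hβ, hw.hom_ext ?_ ?_, hw.lift_fst _ _ _⟩,
      Subtype.ext (hw.lift_snd _ _ _)⟩
    · rw [Category.assoc, hw.lift_fst, comp_zero, zero_comp]
    · rw [Category.assoc, hw.lift_snd, β.2.1, zero_comp]
end

section
/- Let 𝒜 be an abelian category and let a : A₁ → A₀ and b : B₁ → B₀ be objects of the arrow 2-category 𝒜^[1] such that A₀ and B₀ are projective. If (f₀,f₁) : a → b is a morphism in 𝒜^[1] such that the induced morphisms ker a → ker b and coker a → coker b are isomorphisms, then (f₀,f₁) is a homotopy equivalence: there exists a morphism (g₀,g₁) : b → a in 𝒜^[1] such that (g₀,g₁) ∘ (f₀,f₁) is homotopic to the identity of a and (f₀,f₁) ∘ (g₀,g₁) is homotopic to the identity of b. -/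
open CategoryTheory CategoryTheory.Limits

universe v u

/-!
View `a` and `b` as two-term complexes. The mapping cone `A₁ ⟶ A₀ ⊞ B₁ ⟶ B₀` of `f` is short
exact: a diagram chase (up to refinements) shows that injectivity and surjectivity of `f` on
kernels and cokernels give exactness at each of the three spots. Since `B₀` is projective, the
cone splits, and the components of a splitting are a homotopy inverse of `f` together with the
two homotopies.
-/

namespace ArrowMor

section Preadditive

variable {C : Type u} [Category.{v} C] [Preadditive C] {A₁ A₀ B₁ B₀ : C}
  {a : A₁ ⟶ A₀} {b : B₁ ⟶ B₀} [HasBinaryBiproduct A₀ B₁]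

noncomputable abbrev cone (f : ArrowMor a b) : ShortComplex C :=
  ShortComplex.mk (biprod.lift a (-f.f₁)) (biprod.desc f.f₀ b) (by simp [f.comm])

variable {f : ArrowMor a b} (s : f.cone.Splitting)

noncomputable def homotopyInverseOfSplitting : ArrowMor b a where
  f₀ := s.s ≫ biprod.fst
  f₁ := -(biprod.inr ≫ s.r)
  comm := by
    have hid : biprod.inr ≫ s.r ≫ a + b ≫ s.s ≫ biprod.fst = 0 := by
      simpa using biprod.inr ≫= s.id =≫ biprod.fst
    simpa [eq_neg_iff_add_eq_zero, add_comm] using hid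

theorem isHomotopy_comp_homotopyInverseOfSplitting :
    IsHomotopy (f.comp (homotopyInverseOfSplitting s)) (id a) (-(biprod.inl ≫ s.r)) := by
  have hr : a ≫ biprod.inl ≫ s.r - f.f₁ ≫ biprod.inr ≫ s.r = 𝟙 A₁ := by
    simpa [biprod.lift_eq, sub_eq_add_neg] using s.f_r
  have hid : biprod.inl ≫ s.r ≫ a + f.f₀ ≫ s.s ≫ biprod.fst = 𝟙 A₀ := by
    simpa using biprod.inl ≫= s.id =≫ biprod.fst
  constructor
  · dsimp [comp, id, homotopyInverseOfSplitting]
    rw [← hr, Preadditive.comp_neg, Preadditive.comp_neg]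
    abel
  · simp [comp, id, homotopyInverseOfSplitting, ← hid]

theorem isHomotopy_homotopyInverseOfSplitting_comp :
    IsHomotopy ((homotopyInverseOfSplitting s).comp f) (id b) (-(s.s ≫ biprod.snd)) := by
  have hs : s.s ≫ biprod.fst ≫ f.f₀ + s.s ≫ biprod.snd ≫ b = 𝟙 B₀ := by
    simpa [biprod.desc_eq] using s.s_g
  have hid : b ≫ s.s ≫ biprod.snd - biprod.inr ≫ s.r ≫ f.f₁ = 𝟙 B₁ := by
    simpa [sub_eq_add_neg, add_comm] using biprod.inr ≫= s.id =≫ biprod.snd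
  constructor
  · dsimp [comp, id, homotopyInverseOfSplitting]
    rw [← hid, Preadditive.neg_comp, Preadditive.comp_neg, Category.assoc]
    abel
  · simp [comp, id, homotopyInverseOfSplitting, ← hs]

end Preadditive

section Abelian

variable {C : Type u} [Category.{v} C] [Abelian C] {A₁ A₀ B₁ B₀ : C}
  {a : A₁ ⟶ A₀} {b : B₁ ⟶ B₀} (f : ArrowMor a b)

instance mono_cone_f [Mono f.kerMap] : Mono f.cone.f := by
  refine Preadditive.mono_of_cancel_zero _ fun y hy ↦ ?_
  have ha : y ≫ a = 0 := by simpa using hy =≫ biprod.fst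
  have hf : y ≫ f.f₁ = 0 := by simpa using hy =≫ biprod.snd
  have hlift : kernel.lift a y ha ≫ f.kerMap = 0 := by ext; simp [hf]
  rw [← kernel.lift_ι a y ha, zero_of_comp_mono _ hlift, zero_comp]

instance epi_cone_g [Epi f.cokerMap] : Epi f.cone.g := by
  refine Preadditive.epi_of_cancel_zero _ fun z hz ↦ ?_
  have hb : b ≫ z = 0 := by simpa using biprod.inr ≫= hz
  have hf : f.f₀ ≫ z = 0 := by simpa using biprod.inl ≫= hz
  have hdesc : f.cokerMap ≫ cokernel.desc b z hb = 0 := by ext; simp [hf]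
  rw [← cokernel.π_desc b z hb, zero_of_epi_comp _ hdesc, comp_zero]

theorem exists_lift_up_to_refinements [Epi f.kerMap] [Mono f.cokerMap] {T : C}
    (x₀ : T ⟶ A₀) (x₁ : T ⟶ B₁) (h : x₀ ≫ f.f₀ = x₁ ≫ b) :
    ∃ (T' : C) (π : T' ⟶ T) (_ : Epi π) (y : T' ⟶ A₁),
      y ≫ a = π ≫ x₀ ∧ y ≫ f.f₁ = π ≫ x₁ := by
  have hx₀ : x₀ ≫ cokernel.π a = 0 := by
    refine zero_of_comp_mono f.cokerMap ?_
    simp [reassoc_of% h]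
  -- Lift `x₀` along `a`; the error of the lift on the `B₁` side lies in `ker b`, and
  -- surjectivity on kernels corrects it by an element of `ker a`.
  obtain ⟨T₁, π₁, _, u, hu⟩ :=
    (ShortComplex.exact_cokernel a).exact_up_to_refinements x₀ hx₀
  replace hu : π₁ ≫ x₀ = u ≫ a := hu
  have hv : (u ≫ f.f₁ - π₁ ≫ x₁) ≫ b = 0 := by
    simp [← f.comm, reassoc_of% hu, ← h]
  obtain ⟨T₂, π₂, _, k, hk⟩ :=
    surjective_up_to_refinements_of_epi f.kerMap (kernel.lift b _ hv)
  refine ⟨T₂, π₂ ≫ π₁, inferInstance, π₂ ≫ u - k ≫ kernel.ι a, ?_, ?_⟩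
  · simp [hu]
  · have hk' := hk =≫ kernel.ι b
    simp only [Category.assoc, kernel.lift_ι, Preadditive.comp_sub] at hk'
    simp only [Preadditive.sub_comp, Category.assoc, ← hk']
    abel

theorem cone_exact [Epi f.kerMap] [Mono f.cokerMap] : f.cone.Exact := by
  rw [ShortComplex.exact_iff_exact_up_to_refinements]
  intro T x hx
  obtain ⟨T', π, _, y, ha, hf⟩ := f.exists_lift_up_to_refinements (x ≫ biprod.fst)
    (-(x ≫ biprod.snd)) (by simpa [biprod.desc_eq, add_eq_zero_iff_eq_neg] using hx)
  refine ⟨T', π, inferInstance, y, ?_⟩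
  ext <;> simp [ha, hf]

theorem cone_shortExact [IsIso f.kerMap] [IsIso f.cokerMap] : f.cone.ShortExact :=
  ⟨f.cone_exact⟩

end Abelian

end ArrowMor

variable {C : Type u} [Category.{v} C] [Abelian C]

theorem homotopyEquiv_of_isIso_kerMap_cokerMap_general {A₁ A₀ B₁ B₀ : C}
    (a : A₁ ⟶ A₀) (b : B₁ ⟶ B₀) [Projective B₀]
    (f : ArrowMor a b) (hker : IsIso f.kerMap) (hcoker : IsIso f.cokerMap) :
    ∃ g : ArrowMor b a,
      Homotopic a a (f.comp g) (ArrowMor.id a) ∧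
      Homotopic b b (g.comp f) (ArrowMor.id b) := by
  have : Projective f.cone.X₃ := ‹Projective B₀›
  let s := f.cone_shortExact.splittingOfProjective
  exact ⟨ArrowMor.homotopyInverseOfSplitting s,
    ⟨_, ArrowMor.isHomotopy_comp_homotopyInverseOfSplitting s⟩,
    ⟨_, ArrowMor.isHomotopy_homotopyInverseOfSplitting_comp s⟩⟩

/-- Let `𝒜` be abelian and `a : A₁ ⟶ A₀`, `b : B₁ ⟶ B₀` objects of
`𝒜^[1]` with `A₀` and `B₀` projective.  Any morphism `(f₀,f₁) : a ⟶ b` inducing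
isomorphisms on kernels and cokernels is a homotopy equivalence. -/
theorem homotopyEquiv_of_isIso_kerMap_cokerMap {A₁ A₀ B₁ B₀ : C}
    (a : A₁ ⟶ A₀) (b : B₁ ⟶ B₀) [Projective A₀] [Projective B₀]
    (f : ArrowMor a b) (hker : IsIso f.kerMap) (hcoker : IsIso f.cokerMap) :
    ∃ g : ArrowMor b a,
      Homotopic a a (f.comp g) (ArrowMor.id a) ∧
      Homotopic b b (g.comp f) (ArrowMor.id b) :=
  homotopyEquiv_of_isIso_kerMap_cokerMap_general a b f hker hcoker
end

section
/- Let 𝒜 be an abelian category with enough projectives and let (f₀,f₁) : a → b be a morphism between objects a : A₁ → A₀ and b : B₁ → B₀ of the arrow 2-category 𝒜^[1] with A₀ and B₀ projective. Then the following are equivalent: (1) for every object x : X₁ → X₀ of 𝒜^[1] with X₀ projective and every α : X₀ → A₁ with α ∘ x = 0 and a ∘ α = 0, the vanishing f₁ ∘ α = 0 implies α = 0; (2) the induced morphism ker a → ker b is a monomorphism; (3) the morphism (−a, f₁) : A₁ → A₀ ⊕ B₁ with components −a and f₁ is a monomorphism in 𝒜. -/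
open CategoryTheory CategoryTheory.Limits

universe v u

/-! All three conditions say that no nonzero morphism into `A₁` is killed by both `a` and `f₁`.
For (1) it suffices to test on projectives, since every object is the target of an epimorphism
from a projective, and the arrow `x` can be taken to be `0`. -/

section

variable {C : Type u} [Category.{v} C]

theorem mono_biprod_lift_iff [Preadditive C] [HasBinaryBiproducts C] {X Y Z : C}
    (u : X ⟶ Y) (v : X ⟶ Z) :
    Mono (biprod.lift u v) ↔ ∀ ⦃T : C⦄ (g : T ⟶ X), g ≫ u = 0 → g ≫ v = 0 → g = 0 := by
  simp only [Preadditive.mono_iff_cancel_zero, biprod.hom_ext_iff, Category.assoc,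
    biprod.lift_fst, biprod.lift_snd, zero_comp, and_imp]

theorem mono_kernel_map_iff [Preadditive C] [HasKernels C] {A₁ A₀ B₁ B₀ : C}
    (a : A₁ ⟶ A₀) (b : B₁ ⟶ B₀) (f₁ : A₁ ⟶ B₁) (f₀ : A₀ ⟶ B₀) (w : a ≫ f₀ = f₁ ≫ b) :
    Mono (kernel.map a b f₁ f₀ w) ↔
      ∀ ⦃T : C⦄ (g : T ⟶ A₁), g ≫ a = 0 → g ≫ f₁ = 0 → g = 0 := by
  rw [Preadditive.mono_iff_cancel_zero]
  constructor
  · intro h T g ha hf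
    have hlift : kernel.lift a g ha ≫ kernel.map a b f₁ f₀ w = 0 := by
      ext
      simp [hf]
    rw [← kernel.lift_ι a g ha, h _ _ hlift, zero_comp]
  · intro h T t ht
    have hι : (t ≫ kernel.ι a) ≫ f₁ = 0 := by
      simpa using ht =≫ kernel.ι b
    exact zero_of_comp_mono (kernel.ι a) (h _ (by simp) hι)

theorem eq_zero_of_forall_projective [HasZeroMorphisms C] [EnoughProjectives C] {X Y Z : C}
    (u : X ⟶ Y) (v : X ⟶ Z)
    (h : ∀ P : C, Projective P → ∀ α : P ⟶ X, α ≫ u = 0 → α ≫ v = 0 → α = 0)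
    ⦃T : C⦄ (g : T ⟶ X) (hu : g ≫ u = 0) (hv : g ≫ v = 0) : g = 0 :=
  zero_of_epi_comp (Projective.π T) <|
    h _ (Projective.projective_over T) _ (by simp [hu]) (by simp [hv])

end

variable {C : Type u} [Category.{v} C] [Abelian C]

theorem faithful_tfae_general [EnoughProjectives C] {A₁ A₀ B₁ B₀ : C}
    (a : A₁ ⟶ A₀) (b : B₁ ⟶ B₀) (f : ArrowMor a b) :
    [∀ (X₁ X₀ : C) (x : X₁ ⟶ X₀), Projective X₀ →
        ∀ α : X₀ ⟶ A₁, x ≫ α = 0 → α ≫ a = 0 → α ≫ f.f₁ = 0 → α = 0,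
      Mono f.kerMap,
      Mono (biprod.lift (-a) f.f₁)].TFAE := by
  have hlift : Mono (biprod.lift (-a) f.f₁) ↔
      ∀ ⦃T : C⦄ (g : T ⟶ A₁), g ≫ a = 0 → g ≫ f.f₁ = 0 → g = 0 := by
    simp only [mono_biprod_lift_iff, Preadditive.comp_neg, neg_eq_zero]
  tfae_have 1 ↔ 3 := by
    rw [hlift]
    refine ⟨fun h ↦ eq_zero_of_forall_projective a f.f₁ fun P hP α ↦ h P P 0 hP α (by simp),
      fun h _ _ _ _ α _ ↦ h α⟩
  tfae_have 2 ↔ 3 := by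
    rw [hlift, mono_kernel_map_iff]
  tfae_finish

/-- Let `𝒜` be abelian with enough projectives and `(f₀,f₁) : a ⟶ b` a
morphism of `𝒜^[1]` with `A₀`, `B₀` projective.  TFAE: (1) `(f₀,f₁)` is faithful (whiskering
kills no nonzero self-homotopy from an object of `𝒜^[1]_c`); (2) the induced morphism
`ker a ⟶ ker b` is a monomorphism; (3) `(-a, f₁) : A₁ ⟶ A₀ ⊕ B₁` is a monomorphism. -/
theorem faithful_tfae [EnoughProjectives C] {A₁ A₀ B₁ B₀ : C}
    (a : A₁ ⟶ A₀) (b : B₁ ⟶ B₀) [Projective A₀] [Projective B₀] (f : ArrowMor a b) :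
    [∀ (X₁ X₀ : C) (x : X₁ ⟶ X₀), Projective X₀ →
        ∀ α : X₀ ⟶ A₁, x ≫ α = 0 → α ≫ a = 0 → α ≫ f.f₁ = 0 → α = 0,
      Mono f.kerMap,
      Mono (biprod.lift (-a) f.f₁)].TFAE :=
  faithful_tfae_general a b f
end

section
/- Let 𝒜 be an abelian category with enough projectives and let (f₀,f₁) : a → b be a morphism between objects a : A₁ → A₀ and b : B₁ → B₀ of the arrow 2-category 𝒜^[1] with A₀ and B₀ projective. Then the following are equivalent: (1) for every object x : X₁ → X₀ of 𝒜^[1] with X₀ projective, the map α ↦ f₁ ∘ α is a bijection from {α : X₀ → A₁ | α ∘ x = 0, a ∘ α = 0} onto {β : X₀ → B₁ | β ∘ x = 0, b ∘ β = 0}, and post-composition with (f₀,f₁) is injective on homotopy classes of morphisms x → a; (2) the induced morphism ker a → ker b is an isomorphism and the induced morphism coker a → coker b is a monomorphism. -/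
/-
Everything is tested against projective sources. A map `α : P ⟶ A₁` with `α ≫ a = 0` is a map
into `ker a`, so bijectivity of `α ↦ α ≫ f₁` on such maps (for all projective `P`) says that
`ker a ⟶ ker b` is an isomorphism. A map `w : P ⟶ A₀` factors through `a` iff it dies in
`coker a`, so `coker a ⟶ coker b` is mono iff every `w` with `w ≫ f₀` factoring through `b`
factors through `a`; this is exactly what injectivity on homotopy classes says for the
morphisms `(w, 0), 0 : (0 : P ⟶ P) ⟶ a`. Conversely, a null-homotopy `β` of `u ≫ f - v ≫ f` is
first corrected along `coker a` to give a homotopy `α₀` on the `A₀`-side, and the remaining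
error `β - α₀ ≫ f₁` lies in `ker b ≅ ker a`.
-/

open CategoryTheory CategoryTheory.Limits

universe v u

variable {C : Type u} [Category.{v} C] [Abelian C]

namespace ArrowMor

variable {A₁ A₀ B₁ B₀ : C} {a : A₁ ⟶ A₀} {b : B₁ ⟶ B₀} (f : ArrowMor a b)

/-- The map `α ↦ α ≫ f₁` on self-homotopies of the zero morphism `x ⟶ a`. -/
def postcompKer {X₁ X₀ : C} (x : X₁ ⟶ X₀) :
    {α : X₀ ⟶ A₁ // x ≫ α = 0 ∧ α ≫ a = 0} → {β : X₀ ⟶ B₁ // x ≫ β = 0 ∧ β ≫ b = 0} :=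
  fun α => ⟨α.1 ≫ f.f₁, by rw [← Category.assoc, α.2.1, zero_comp],
    by rw [Category.assoc, ← f.comm, ← Category.assoc, α.2.2, zero_comp]⟩

def postcompHomotopyClass {X₁ X₀ : C} (x : X₁ ⟶ X₀) : Quot (Homotopic x a) → Quot (Homotopic x b) :=
  Quot.map (fun u : ArrowMor x a => u.comp f) (fun _ _ huv => huv.comp_right f)

theorem injective_postcompHomotopyClass_iff {X₁ X₀ : C} (x : X₁ ⟶ X₀) :
    Function.Injective (f.postcompHomotopyClass x) ↔
      ∀ u v : ArrowMor x a, Homotopic x b (u.comp f) (v.comp f) → Homotopic x a u v := by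
  constructor
  · intro hinj u v h
    exact (homSetoid x a).iseqv.eqvGen_iff.1 (Quot.eq.1 (hinj (Quot.sound h)))
  · intro h q₁ q₂
    induction q₁ using Quot.ind
    induction q₂ using Quot.ind
    exact fun hq => Quot.sound (h _ _ ((homSetoid x b).iseqv.eqvGen_iff.1 (Quot.eq.1 hq)))

theorem kerMap_ι : f.kerMap ≫ kernel.ι b = kernel.ι a ≫ f.f₁ :=
  kernel.lift_ι _ _ _

theorem π_cokerMap : cokernel.π a ≫ f.cokerMap = f.f₀ ≫ cokernel.π b :=
  cokernel.π_desc _ _ _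

theorem eq_zero_of_comp_f₁_eq_zero [IsIso f.kerMap] {P : C} {α : P ⟶ A₁} (ha : α ≫ a = 0)
    (hf : α ≫ f.f₁ = 0) : α = 0 := by
  suffices kernel.lift a α ha = 0 by rw [← kernel.lift_ι a α ha, this, zero_comp]
  rw [← cancel_mono f.kerMap, ← cancel_mono (kernel.ι b)]
  simp [hf]

theorem exists_comp_f₁_eq [IsIso f.kerMap] {P : C} (β : P ⟶ B₁) (hb : β ≫ b = 0) :
    ∃ α : P ⟶ A₁, α ≫ a = 0 ∧ α ≫ f.f₁ = β :=
  ⟨kernel.lift b β hb ≫ inv f.kerMap ≫ kernel.ι a, by simp, by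
    rw [Category.assoc, Category.assoc, ← kerMap_ι, IsIso.inv_hom_id_assoc, kernel.lift_ι]⟩

theorem bijective_postcompKer [IsIso f.kerMap] {X₁ X₀ : C} (x : X₁ ⟶ X₀) :
    Function.Bijective (f.postcompKer x) := by
  constructor
  · rintro ⟨α₁, _, h₁⟩ ⟨α₂, _, h₂⟩ heq
    refine Subtype.ext (sub_eq_zero.1 (f.eq_zero_of_comp_f₁_eq_zero ?_ ?_))
    · rw [Preadditive.sub_comp, h₁, h₂, sub_zero]
    · rw [Preadditive.sub_comp, sub_eq_zero]; exact congrArg Subtype.val heq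
  · rintro ⟨β, hx, hb⟩
    obtain ⟨α, ha, rfl⟩ := f.exists_comp_f₁_eq β hb
    refine ⟨⟨α, f.eq_zero_of_comp_f₁_eq_zero ?_ ?_, ha⟩, rfl⟩
    · rw [Category.assoc, ha, comp_zero]
    · rw [Category.assoc, hx]

theorem isIso_kerMap_of_bijective [EnoughProjectives C]
    (h : ∀ P : C, Projective P → Function.Bijective (f.postcompKer (0 : P ⟶ P))) :
    IsIso f.kerMap := by
  have : Mono f.kerMap := by
    refine Preadditive.mono_of_cancel_zero _ fun {T} t ht => ?_
    let α : {α : Projective.over T ⟶ A₁ // (0 : Projective.over T ⟶ _) ≫ α = 0 ∧ α ≫ a = 0} :=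
      ⟨Projective.π T ≫ t ≫ kernel.ι a, zero_comp, by simp⟩
    have hα : f.postcompKer _ α = f.postcompKer _ ⟨0, zero_comp, zero_comp⟩ :=
      Subtype.ext (by
        simp only [postcompKer, α, Category.assoc, ← kerMap_ι, reassoc_of% ht, zero_comp,
          comp_zero])
    have := congrArg Subtype.val ((h _ inferInstance).1 hα)
    rw [← cancel_epi (Projective.π T), ← cancel_mono (kernel.ι a)]
    simpa [α] using this
  have : Epi f.kerMap := by
    obtain ⟨α, hα⟩ := (h _ inferInstance).2
      ⟨Projective.π (kernel b) ≫ kernel.ι b, zero_comp, by simp⟩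
    have hfac : kernel.lift a α.1 α.2.2 ≫ f.kerMap = Projective.π (kernel b) := by
      rw [← cancel_mono (kernel.ι b), Category.assoc, kerMap_ι, kernel.lift_ι_assoc]
      exact congrArg Subtype.val hα
    exact epi_of_epi_fac hfac
  exact isIso_of_mono_of_epi _

theorem exists_comp_eq_of_mono_cokerMap [Mono f.cokerMap] {P : C} [Projective P]
    (w : P ⟶ A₀) (β : P ⟶ B₁) (hβ : β ≫ b = w ≫ f.f₀) : ∃ α : P ⟶ A₁, α ≫ a = w := by
  have hw : w ≫ cokernel.π a = 0 := by
    rw [← cancel_mono f.cokerMap, Category.assoc, π_cokerMap, ← Category.assoc, ← hβ]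
    simp
  exact ⟨_, (ShortComplex.exact_cokernel a).liftFromProjective_comp w hw⟩

theorem mono_cokerMap_of_exists_comp_eq [EnoughProjectives C]
    (h : ∀ (P : C) [Projective P] (w : P ⟶ A₀) (β : P ⟶ B₁), β ≫ b = w ≫ f.f₀ →
      ∃ α : P ⟶ A₁, α ≫ a = w) :
    Mono f.cokerMap := by
  refine Preadditive.mono_of_cancel_zero _ fun {T} t ht => ?_
  let w := Projective.factorThru (Projective.π T ≫ t) (cokernel.π a)
  have hw : w ≫ cokernel.π a = Projective.π T ≫ t := Projective.factorThru_comp _ _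
  have hwf : (w ≫ f.f₀) ≫ cokernel.π b = 0 := by
    rw [Category.assoc, ← π_cokerMap, reassoc_of% hw, ht, comp_zero]
  obtain ⟨α, hα⟩ := h _ w _ ((ShortComplex.exact_cokernel b).liftFromProjective_comp _ hwf)
  rw [← cancel_epi (Projective.π T), ← hw, ← hα]
  simp

theorem homotopic_of_homotopic_comp [IsIso f.kerMap] [Mono f.cokerMap] {X₁ X₀ : C}
    [Projective X₀] {x : X₁ ⟶ X₀} {u v : ArrowMor x a}
    (h : Homotopic x b (u.comp f) (v.comp f)) : Homotopic x a u v := by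
  obtain ⟨β, hβ₁, hβ₀⟩ := h
  simp only [comp, ← Preadditive.sub_comp] at hβ₁ hβ₀
  obtain ⟨α₀, hα₀⟩ := f.exists_comp_eq_of_mono_cokerMap _ β hβ₀.symm
  obtain ⟨γ, hγa, hγf⟩ := f.exists_comp_f₁_eq (β - α₀ ≫ f.f₁) (by
    rw [Preadditive.sub_comp, ← hβ₀, ← hα₀, Category.assoc, Category.assoc, f.comm, sub_self])
  refine ⟨α₀ + γ, ?_, by rw [Preadditive.add_comp, hγa, add_zero, hα₀]⟩
  rw [← sub_eq_zero]
  apply f.eq_zero_of_comp_f₁_eq_zero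
  · simp [Preadditive.sub_comp, Preadditive.comp_sub, hγa, hα₀, u.comm, v.comm]
  · simp [Preadditive.sub_comp, Preadditive.comp_add, hβ₁, hγf]

end ArrowMor

/-- Let `𝒜` be abelian with enough projectives and `(f₀,f₁) : a ⟶ b` a
morphism of `𝒜^[1]` with `A₀`, `B₀` projective.  Then `(f₀,f₁)` is fully faithful (for every
`x : X₁ ⟶ X₀` with `X₀` projective, whiskering is bijective on self-homotopies of morphisms
`x ⟶ a` and post-composition is injective on homotopy classes `x ⟶ a`) iff the induced
morphism `ker a ⟶ ker b` is an isomorphism and `coker a ⟶ coker b` is a monomorphism. -/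
theorem fullyFaithful_iff [EnoughProjectives C] {A₁ A₀ B₁ B₀ : C}
    (a : A₁ ⟶ A₀) (b : B₁ ⟶ B₀) (f : ArrowMor a b) :
    (∀ (X₁ X₀ : C) (x : X₁ ⟶ X₀), Projective X₀ →
      (Function.Bijective
        (fun α : {α : X₀ ⟶ A₁ // x ≫ α = 0 ∧ α ≫ a = 0} =>
          (⟨α.1 ≫ f.f₁,
            by rw [← Category.assoc, α.2.1, zero_comp],
            by rw [Category.assoc, ← f.comm, ← Category.assoc, α.2.2, zero_comp]⟩ :
            {β : X₀ ⟶ B₁ // x ≫ β = 0 ∧ β ≫ b = 0})) ∧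
       Function.Injective
        (Quot.map (fun u : ArrowMor x a => u.comp f)
          (fun _ _ huv => huv.comp_right f) :
            Quot (Homotopic x a) → Quot (Homotopic x b)))) ↔
    (IsIso f.kerMap ∧ Mono f.cokerMap) := by
  refine ⟨fun h => ⟨?_, ?_⟩, ?_⟩
  · exact f.isIso_kerMap_of_bijective fun P hP => (h P P 0 hP).1
  · refine f.mono_cokerMap_of_exists_comp_eq fun P _ w β hβ => ?_
    obtain ⟨α, -, hα⟩ := (f.injective_postcompHomotopyClass_iff (0 : P ⟶ P)).1 (h P P 0 ‹_›).2
      ⟨w, 0, by simp⟩ ⟨0, 0, by simp⟩ ⟨β, by simp [ArrowMor.comp], by simp [ArrowMor.comp, hβ]⟩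
    exact ⟨α, by simpa using hα.symm⟩
  · rintro ⟨_, _⟩ X₁ X₀ x _
    exact ⟨f.bijective_postcompKer x, (f.injective_postcompHomotopyClass_iff x).2
      fun _ _ => f.homotopic_of_homotopic_comp⟩
end

section
/- Let 𝒜 be an abelian category and let (f₀,f₁) : a → b be a morphism between objects a : A₁ → A₀ and b : B₁ → B₀ of the arrow 2-category 𝒜^[1]. Then the following are equivalent: (1) for every object N of 𝒜 and every β : B₀ → N, the vanishings β ∘ f₀ = 0 and β ∘ b = 0 imply β = 0; (2) the induced morphism coker a → coker b is an epimorphism; (3) the morphism (f₀, b) : A₀ ⊕ B₁ → B₀ determined by f₀ and b is an epimorphism in 𝒜. -/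
open CategoryTheory CategoryTheory.Limits

universe v u

section Cofaithful

open Preadditive

variable {C : Type u} [Category.{v} C] [Preadditive C]

theorem epi_biprod_desc_iff {X Y Z : C} [HasBinaryBiproduct X Y] (g : X ⟶ Z) (h : Y ⟶ Z) :
    Epi (biprod.desc g h) ↔ ∀ (N : C) (β : Z ⟶ N), g ≫ β = 0 → h ≫ β = 0 → β = 0 := by
  rw [epi_iff_cancel_zero]
  refine ⟨fun H N β hg hh => H N β (by ext <;> simp [hg, hh]), fun H N β hβ => ?_⟩
  exact H N β (by simpa using biprod.inl ≫= hβ) (by simpa using biprod.inr ≫= hβ)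

/-- Morphisms `γ` out of `cokernel b` correspond to the `β` with `b ≫ β = 0`, and the map of
cokernels kills `γ` exactly when `f₀` kills the corresponding `β`. -/
theorem epi_cokernel_map_iff {A₁ A₀ B₁ B₀ : C} (a : A₁ ⟶ A₀) (b : B₁ ⟶ B₀) [HasCokernel a]
    [HasCokernel b] (f₁ : A₁ ⟶ B₁) (f₀ : A₀ ⟶ B₀) (w : a ≫ f₀ = f₁ ≫ b) :
    Epi (cokernel.map a b f₁ f₀ w) ↔
      ∀ (N : C) (β : B₀ ⟶ N), f₀ ≫ β = 0 → b ≫ β = 0 → β = 0 := by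
  rw [epi_iff_cancel_zero]
  constructor
  · intro H N β h₀ hb
    have hγ : cokernel.map a b f₁ f₀ w ≫ cokernel.desc b β hb = 0 := by
      ext; simpa using h₀
    simpa [hb] using cokernel.π b ≫= H N _ hγ
  · intro H N γ hγ
    have h₀ : f₀ ≫ cokernel.π b ≫ γ = 0 := by simpa using cokernel.π a ≫= hγ
    rw [← cancel_epi (cokernel.π b), comp_zero]
    exact H N _ h₀ (by simp)

end Cofaithful

variable {C : Type u} [Category.{v} C] [Abelian C]

/-- Let `𝒜` be abelian and `(f₀,f₁) : a ⟶ b` a morphism of `𝒜^[1]`.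
TFAE: (1) `(f₀,f₁)` is cofaithful (any `β : B₀ ⟶ N` with `β ∘ f₀ = 0` and `β ∘ b = 0`
vanishes); (2) the induced morphism `coker a ⟶ coker b` is an epimorphism;
(3) `(f₀, b) : A₀ ⊕ B₁ ⟶ B₀` is an epimorphism. -/
theorem cofaithful_tfae {A₁ A₀ B₁ B₀ : C}
    (a : A₁ ⟶ A₀) (b : B₁ ⟶ B₀) (f : ArrowMor a b) :
    [∀ (N : C) (β : B₀ ⟶ N), f.f₀ ≫ β = 0 → b ≫ β = 0 → β = 0,
      Epi f.cokerMap,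
      Epi (biprod.desc f.f₀ b)].TFAE := by
  tfae_have 1 ↔ 2 := (epi_cokernel_map_iff a b f.f₁ f.f₀ f.comm).symm
  tfae_have 1 ↔ 3 := (epi_biprod_desc_iff f.f₀ b).symm
  tfae_finish
end

section
/- Let 𝒜 be an abelian category with enough projectives and let (f₀,f₁) : a → b be a morphism between objects a : A₁ → A₀ and b : B₁ → B₀ of the arrow 2-category 𝒜^[1] with A₀ and B₀ projective. Then the following are equivalent: (1) for every object x : X₁ → X₀ of 𝒜^[1] with X₀ projective, the map β ↦ β ∘ f₀ is a bijection from {β : B₀ → X₁ | β ∘ b = 0, x ∘ β = 0} onto {γ : A₀ → X₁ | γ ∘ a = 0, x ∘ γ = 0}, and pre-composition with (f₀,f₁) is injective on homotopy classes of morphisms b → x; (2) the induced morphism coker a → coker b is an isomorphism and the induced morphism ker a → ker b is an epimorphism. -/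
open CategoryTheory CategoryTheory.Limits

universe v u

/-!
Both conditions say that the square formed by `a`, `f₁`, `f₀`, `b` is a pushout.
For (2) this is the description of pushouts in an abelian category by the exact sequence
`A₁ ⟶ A₀ ⊞ B₁ ⟶ B₀ ⟶ 0`, checked with refinements. Given a pushout, the universal property
of `B₀` yields the bijection on self-homotopies and turns a homotopy `f ∘ u ≃ f ∘ v` into one
`u ≃ v`. Conversely, testing (1) against the arrows `T ⟶ 0` gives, for every cocone with
vertex `T`, a factorization through `B₀` (from the homotopy condition and the surjectivity)
which is unique (from the injectivity).
-/

open ZeroObject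

namespace CategoryTheory.Abelian

variable {𝒞 : Type*} [Category 𝒞] [Abelian 𝒞] {X₁ X₂ X₃ X₄ : 𝒞}
  {t : X₁ ⟶ X₂} {l : X₁ ⟶ X₃} {r : X₂ ⟶ X₄} {b : X₃ ⟶ X₄}

theorem exact_of_mono_cokernel_map_of_epi_kernel_map (w : t ≫ r = l ≫ b)
    [Mono (cokernel.map t b l r w)] [Epi (kernel.map t b l r w)] :
    (ShortComplex.mk (biprod.lift t (-l)) (biprod.desc r b) (by simp [w])).Exact := by
  rw [ShortComplex.exact_iff_exact_up_to_refinements]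
  intro A z hz
  obtain ⟨y, u, rfl⟩ : ∃ y u, z = biprod.lift y u :=
    ⟨z ≫ biprod.fst, z ≫ biprod.snd, by ext <;> simp⟩
  have hyu : y ≫ r = -(u ≫ b) := by
    rw [← add_eq_zero_iff_eq_neg]
    simpa using hz
  obtain ⟨A₁, π₁, _, x₁, hx₁⟩ :=
    (ShortComplex.exact_of_g_is_cokernel _ (cokernelIsCokernel t)).exact_up_to_refinements
      (S := ShortComplex.mk _ _ (cokernel.condition t)) y (by
        rw [← cancel_mono (cokernel.map t b l r w)]
        simp [reassoc_of% hyu])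
  dsimp at hx₁
  obtain ⟨A₂, π₂, _, k, hk⟩ := surjective_up_to_refinements_of_epi (kernel.map t b l r w)
    (kernel.lift b (π₁ ≫ u + x₁ ≫ l) (by simp [← w, ← reassoc_of% hx₁, hyu]))
  refine ⟨A₂, π₂ ≫ π₁, inferInstance, π₂ ≫ x₁ - k ≫ kernel.ι t, ?_⟩
  apply biprod.hom_ext
  · simp [hx₁]
  · have := hk =≫ kernel.ι b
    simp only [Category.assoc, kernel.lift_ι, Preadditive.comp_add] at this
    simp [← this]

theorem epi_biprod_desc_of_epi_cokernel_map (w : t ≫ r = l ≫ b)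
    [Epi (cokernel.map t b l r w)] : Epi (biprod.desc r b) := by
  rw [Preadditive.epi_iff_cancel_zero]
  intro T g hg
  have hb : b ≫ g = 0 := by simpa using biprod.inr ≫= hg
  have hr : r ≫ g = 0 := by simpa using biprod.inl ≫= hg
  rw [← cokernel.π_desc b g hb]
  suffices cokernel.desc b g hb = 0 by rw [this, comp_zero]
  rw [← cancel_epi (cokernel.map t b l r w), ← cancel_epi (cokernel.π t)]
  simp [hr]

theorem isPushout_of_isIso_cokernel_map_of_epi_kernel_map (w : t ≫ r = l ≫ b)
    [IsIso (cokernel.map t b l r w)] [Epi (kernel.map t b l r w)] : IsPushout t l r b :=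
  have := epi_biprod_desc_of_epi_cokernel_map w
  .of_isColimit' ⟨w⟩ ((CommSq.mk w).isColimitEquivIsColimitCokernelCofork.symm
    (exact_of_mono_cokernel_map_of_epi_kernel_map w).gIsCokernel)

theorem isIso_cokernel_map_of_isPushout (sq : IsPushout t l r b) :
    IsIso (cokernel.map t b l r sq.w) := by
  refine ⟨cokernel.desc b (sq.desc (cokernel.π t) 0 (by simp)) (by simp), ?_, ?_⟩
  · ext; simp
  · ext
    simp only [cokernel.π_desc_assoc, Category.comp_id]
    apply sq.hom_ext <;> simp

theorem isPushout_iff_isIso_cokernel_map_and_epi_kernel_map (w : t ≫ r = l ≫ b) :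
    IsPushout t l r b ↔ IsIso (cokernel.map t b l r w) ∧ Epi (kernel.map t b l r w) :=
  ⟨fun sq => ⟨isIso_cokernel_map_of_isPushout sq, epi_kernel_map_of_isPushout sq⟩,
    fun ⟨_, _⟩ => isPushout_of_isIso_cokernel_map_of_epi_kernel_map w⟩

end CategoryTheory.Abelian

section Preadditive

variable {𝒞 : Type*} [Category 𝒞] [Preadditive 𝒞]

theorem quot_mk_eq_iff_homotopic {A₁ A₀ B₁ B₀ : 𝒞} {a : A₁ ⟶ A₀} {b : B₁ ⟶ B₀}
    {u v : ArrowMor a b} : Quot.mk (Homotopic a b) u = Quot.mk _ v ↔ Homotopic a b u v :=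
  Quotient.eq (r := homSetoid a b)

namespace ArrowMor

variable {A₁ A₀ B₁ B₀ X₁ X₀ : 𝒞} {a : A₁ ⟶ A₀} {b : B₁ ⟶ B₀} (f : ArrowMor a b)

def whiskerSelfHomotopies (x : X₁ ⟶ X₀) :
    {β : B₀ ⟶ X₁ // b ≫ β = 0 ∧ β ≫ x = 0} → {γ : A₀ ⟶ X₁ // a ≫ γ = 0 ∧ γ ≫ x = 0} :=
  fun β => ⟨f.f₀ ≫ β.1, by rw [← Category.assoc, f.comm, Category.assoc, β.2.1, comp_zero],
    by rw [Category.assoc, β.2.2, comp_zero]⟩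

def precompHomotopyClasses (x : X₁ ⟶ X₀) : Quot (Homotopic b x) → Quot (Homotopic a x) :=
  Quot.map (fun u : ArrowMor b x => f.comp u) (fun _ _ huv => huv.comp_left f)

theorem precompHomotopyClasses_injective_iff (x : X₁ ⟶ X₀) :
    Function.Injective (f.precompHomotopyClasses x) ↔
      ∀ u v : ArrowMor b x, Homotopic a x (f.comp u) (f.comp v) → Homotopic b x u v := by
  refine ⟨fun h u v huv => ?_, fun h => ?_⟩
  · exact quot_mk_eq_iff_homotopic.1 (h (quot_mk_eq_iff_homotopic.2 huv))
  · rintro ⟨u⟩ ⟨v⟩ huv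
    exact quot_mk_eq_iff_homotopic.2 (h u v (quot_mk_eq_iff_homotopic.1 huv))

variable {f}

theorem whiskerSelfHomotopies_bijective_of_isPushout (sq : IsPushout a f.f₁ f.f₀ b)
    (x : X₁ ⟶ X₀) : Function.Bijective (f.whiskerSelfHomotopies x) := by
  refine ⟨fun β β' h => Subtype.ext (sq.hom_ext (congrArg Subtype.val h) ?_), fun γ => ?_⟩
  · rw [β.2.1, β'.2.1]
  · obtain ⟨γ, hγa, hγx⟩ := γ
    refine ⟨⟨sq.desc γ 0 (by simp [hγa]), by simp, sq.hom_ext ?_ (by simp)⟩,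
      Subtype.ext (sq.inl_desc _ _ _)⟩
    simp [hγx]

theorem homotopic_of_homotopic_comp_of_isPushout (sq : IsPushout a f.f₁ f.f₀ b)
    {x : X₁ ⟶ X₀} {u v : ArrowMor b x} (h : Homotopic a x (f.comp u) (f.comp v)) :
    Homotopic b x u v := by
  obtain ⟨α, h₁, h₀⟩ := h
  simp only [ArrowMor.comp, ← Preadditive.comp_sub] at h₁ h₀
  refine ⟨sq.desc α (u.f₁ - v.f₁) h₁.symm, (sq.inr_desc _ _ _).symm, sq.hom_ext ?_ ?_⟩
  · simp [h₀]
  · simp [Preadditive.sub_comp, u.comm, v.comm]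

theorem precompHomotopyClasses_injective_of_isPushout (sq : IsPushout a f.f₁ f.f₀ b)
    (x : X₁ ⟶ X₀) : Function.Injective (f.precompHomotopyClasses x) :=
  (f.precompHomotopyClasses_injective_iff x).2 fun _ _ =>
    homotopic_of_homotopic_comp_of_isPushout sq

section ZeroTarget

variable [HasZeroObject 𝒞] {T : 𝒞}

theorem exists_comp_eq_of_precompHomotopyClasses_injective
    (hf : Function.Injective (f.precompHomotopyClasses (0 : T ⟶ 0))) {α : A₀ ⟶ T}
    {g : B₁ ⟶ T} (w : a ≫ α = f.f₁ ≫ g) : ∃ β : B₀ ⟶ T, b ≫ β = g := by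
  obtain ⟨β, h₁, -⟩ := (f.precompHomotopyClasses_injective_iff _).1 hf
    ⟨0, g, by simp⟩ ⟨0, 0, by simp⟩ ⟨α, by simp [ArrowMor.comp, w], by simp [ArrowMor.comp]⟩
  exact ⟨β, by simpa using h₁.symm⟩

theorem eq_of_whiskerSelfHomotopies_injective
    (hf : Function.Injective (f.whiskerSelfHomotopies (0 : T ⟶ 0))) {β β' : B₀ ⟶ T}
    (h₀ : f.f₀ ≫ β = f.f₀ ≫ β') (h₁ : b ≫ β = b ≫ β') : β = β' := by
  rw [← sub_eq_zero]
  have := @hf ⟨β - β', by simp [h₁], by simp⟩ ⟨0, by simp, by simp⟩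
    (Subtype.ext (by simp [whiskerSelfHomotopies, h₀]))
  exact congrArg Subtype.val this

theorem isPushout_of_forall_zero_target
    (hw : ∀ T : 𝒞, Function.Bijective (f.whiskerSelfHomotopies (0 : T ⟶ 0)))
    (hp : ∀ T : 𝒞, Function.Injective (f.precompHomotopyClasses (0 : T ⟶ 0))) :
    IsPushout a f.f₁ f.f₀ b := by
  have desc (s : PushoutCocone a f.f₁) :
      ∃ β : B₀ ⟶ s.pt, f.f₀ ≫ β = s.inl ∧ b ≫ β = s.inr := by
    obtain ⟨β, hβ⟩ := exists_comp_eq_of_precompHomotopyClasses_injective (hp _) s.condition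
    obtain ⟨⟨β', hbβ', _⟩, hγ⟩ := (hw s.pt).2 ⟨s.inl - f.f₀ ≫ β, by
      simp [reassoc_of% f.comm, hβ, s.condition], by simp⟩
    have hf₀β' : f.f₀ ≫ β' = s.inl - f.f₀ ≫ β := congrArg Subtype.val hγ
    exact ⟨β + β', by simp [hf₀β'], by simp [hβ, hbβ']⟩
  choose desc fac_left fac_right using desc
  exact .of_isColimit' ⟨f.comm⟩ (PushoutCocone.IsColimit.mk f.comm desc fac_left fac_right
    fun s m h₀ h₁ => eq_of_whiskerSelfHomotopies_injective (hw s.pt).1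
      (h₀.trans (fac_left s).symm) (h₁.trans (fac_right s).symm))

end ZeroTarget

end ArrowMor

end Preadditive

variable {C : Type u} [Category.{v} C] [Abelian C]

/-- Let `𝒜` be abelian with enough projectives and `(f₀,f₁) : a ⟶ b` a
morphism of `𝒜^[1]` with `A₀`, `B₀` projective.  Then `(f₀,f₁)` is fully cofaithful (for
every `x : X₁ ⟶ X₀` with `X₀` projective, whiskering is bijective on self-homotopies of
morphisms `b ⟶ x` and pre-composition is injective on homotopy classes `b ⟶ x`) iff the
induced morphism `coker a ⟶ coker b` is an isomorphism and `ker a ⟶ ker b` is an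
epimorphism. -/
theorem fullyCofaithful_iff {A₁ A₀ B₁ B₀ : C}
    (a : A₁ ⟶ A₀) (b : B₁ ⟶ B₀) (f : ArrowMor a b) :
    (∀ (X₁ X₀ : C) (x : X₁ ⟶ X₀), Projective X₀ →
      (Function.Bijective
        (fun β : {β : B₀ ⟶ X₁ // b ≫ β = 0 ∧ β ≫ x = 0} =>
          (⟨f.f₀ ≫ β.1,
            by rw [← Category.assoc, f.comm, Category.assoc, β.2.1, comp_zero],
            by rw [Category.assoc, β.2.2, comp_zero]⟩ :
            {γ : A₀ ⟶ X₁ // a ≫ γ = 0 ∧ γ ≫ x = 0})) ∧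
       Function.Injective
        (Quot.map (fun u : ArrowMor b x => f.comp u)
          (fun _ _ huv => huv.comp_left f) :
            Quot (Homotopic b x) → Quot (Homotopic a x)))) ↔
    (IsIso f.cokerMap ∧ Epi f.kerMap) := by
  refine Iff.trans ?_ (Abelian.isPushout_iff_isIso_cokernel_map_and_epi_kernel_map f.comm)
  constructor
  · intro h
    exact ArrowMor.isPushout_of_forall_zero_target (fun T => (h T 0 0 inferInstance).1)
      (fun T => (h T 0 0 inferInstance).2)
  · intro sq X₁ X₀ x _
    exact ⟨ArrowMor.whiskerSelfHomotopies_bijective_of_isPushout sq x,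
      ArrowMor.precompHomotopyClasses_injective_of_isPushout sq x⟩
end

section
/- Let 𝒜 be an abelian category with enough projectives. Let 𝒟 be the category whose objects are monomorphisms a : A₁ → A₀ of 𝒜 with A₀ projective, and whose morphisms from a to b are homotopy classes of morphisms a → b of the arrow 2-category 𝒜^[1]. Then the functor 𝒟 → 𝒜 sending a to coker a (and a homotopy class of (f₀,f₁) to the induced morphism coker a → coker b) is an equivalence of categories. -/
/-!
A monomorphism `b` is the kernel of its cokernel. Hence a map `φ : coker a ⟶ coker b` lifts to
`f₀ : A₀ ⟶ B₀` by projectivity of `A₀`, and `f₁` is then forced; and if `(f₀, f₁)` and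
`(g₀, g₁)` induce the same map on cokernels, `f₀ - g₀` factors through `b` by some `α`, which is
a homotopy because the equation for `f₁ - g₁` follows after cancelling `b`. Finally every object
`X` is the cokernel of `kernel.ι π` for a projective presentation `π : P ⟶ X`.
-/

open CategoryTheory CategoryTheory.Limits

universe v u

namespace ArrowMor

variable {C : Type u} [Category.{v} C] {A₁ A₀ B₁ B₀ D₁ D₀ E₁ E₀ : C}
  {a : A₁ ⟶ A₀} {b : B₁ ⟶ B₀} {d : D₁ ⟶ D₀} {e : E₁ ⟶ E₀}

theorem id_comp' (f : ArrowMor a b) : (ArrowMor.id a).comp f = f :=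
  ext' (by simp [comp, id]) (by simp [comp, id])

theorem comp_id' (f : ArrowMor a b) : f.comp (ArrowMor.id b) = f :=
  ext' (by simp [comp, id]) (by simp [comp, id])

theorem comp_assoc' (f : ArrowMor a b) (g : ArrowMor b d) (h : ArrowMor d e) :
    (f.comp g).comp h = f.comp (g.comp h) :=
  ext' (by simp [comp]) (by simp [comp])

end ArrowMor

variable (C : Type u) [Category.{v} C] [Abelian C]

/-- The objects of the category `𝒟`: monomorphisms `a : A₁ ⟶ A₀` of `𝒜`
with `A₀` projective (the discrete objects of `𝒜^[1]_c`). -/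
structure DiscObj where
  A₁ : C
  A₀ : C
  a : A₁ ⟶ A₀
  mono : Mono a
  proj : Projective A₀

variable {C}

/-- The category `𝒟`: morphisms are homotopy classes of morphisms of arrows. -/
instance : Category (DiscObj C) where
  Hom X Y := Quot (Homotopic X.a Y.a)
  id X := Quot.mk _ (ArrowMor.id X.a)
  comp {X Y Z} f g :=
    Quot.map₂ ArrowMor.comp (fun f _ _ h => h.comp_left f) (fun _ _ g h => h.comp_right g) f g
  id_comp f := by
    induction f using Quot.ind
    exact congrArg (Quot.mk _) (ArrowMor.id_comp' _)
  comp_id f := by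
    induction f using Quot.ind
    exact congrArg (Quot.mk _) (ArrowMor.comp_id' _)
  assoc f g h := by
    induction f using Quot.ind
    induction g using Quot.ind
    induction h using Quot.ind
    exact congrArg (Quot.mk _) (ArrowMor.comp_assoc' _ _ _)

theorem cokerMap_congr {A₁ A₀ B₁ B₀ : C} {a : A₁ ⟶ A₀} {b : B₁ ⟶ B₀}
    {f g : ArrowMor a b} (h : Homotopic a b f g) : f.cokerMap = g.cokerMap := by
  obtain ⟨α, h₁, h₀⟩ := h
  rw [← cancel_epi (cokernel.π a)]
  simp only [ArrowMor.cokerMap, cokernel.π_desc]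
  rw [← sub_eq_zero, ← Preadditive.sub_comp, h₀, Category.assoc, cokernel.condition,
    comp_zero]

/-- The functor `𝒟 ⥤ 𝒜` sending `a` to `coker a` and the homotopy class of `(f₀,f₁)`
to the induced morphism `coker a ⟶ coker b`. -/
noncomputable def discCokernelFunctor : DiscObj C ⥤ C where
  obj X := cokernel X.a
  map {X Y} f := Quot.lift ArrowMor.cokerMap (fun _ _ h => cokerMap_congr h) f
  map_id X := by
    show (ArrowMor.id X.a).cokerMap = 𝟙 _
    refine coequalizer.hom_ext ?_
    simp [ArrowMor.id, ArrowMor.cokerMap]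
  map_comp {X Y Z} f g := by
    obtain ⟨f⟩ := f
    obtain ⟨g⟩ := g
    show (f.comp g).cokerMap = f.cokerMap ≫ g.cokerMap
    refine coequalizer.hom_ext ?_
    simp [ArrowMor.comp, ArrowMor.cokerMap]

section Cokernel

variable {A₁ A₀ B₁ B₀ : C} {a : A₁ ⟶ A₀} {b : B₁ ⟶ B₀}

@[simp]
theorem ArrowMor.π_cokerMap_s9 (f : ArrowMor a b) :
    cokernel.π a ≫ f.cokerMap = f.f₀ ≫ cokernel.π b :=
  cokernel.π_desc _ _ _

noncomputable def ArrowMor.ofCokernelSquare [Mono b] (f₀ : A₀ ⟶ B₀)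
    (φ : cokernel a ⟶ cokernel b) (w : f₀ ≫ cokernel.π b = cokernel.π a ≫ φ) : ArrowMor a b where
  f₀ := f₀
  f₁ := Abelian.monoLift b (a ≫ f₀) <| by
    rw [Category.assoc, w, cokernel.condition_assoc, zero_comp]
  comm := (Abelian.monoLift_comp _ _ _).symm

theorem ArrowMor.cokerMap_ofCokernelSquare [Mono b] (f₀ : A₀ ⟶ B₀)
    (φ : cokernel a ⟶ cokernel b) (w : f₀ ≫ cokernel.π b = cokernel.π a ≫ φ) :
    (ArrowMor.ofCokernelSquare f₀ φ w).cokerMap = φ :=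
  coequalizer.hom_ext (by simpa [ArrowMor.ofCokernelSquare] using w)

theorem ArrowMor.exists_cokerMap_eq [Projective A₀] [Mono b] (φ : cokernel a ⟶ cokernel b) :
    ∃ f : ArrowMor a b, f.cokerMap = φ :=
  ⟨_, ArrowMor.cokerMap_ofCokernelSquare _ φ (Projective.factorThru_comp _ _)⟩

theorem homotopic_of_cokerMap_eq [Mono b] {f g : ArrowMor a b}
    (h : f.cokerMap = g.cokerMap) : Homotopic a b f g := by
  have hz : (f.f₀ - g.f₀) ≫ cokernel.π b = 0 := by
    rw [Preadditive.sub_comp, sub_eq_zero, ← ArrowMor.π_cokerMap_s9, ← ArrowMor.π_cokerMap_s9, h]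
  have hα : Abelian.monoLift b _ hz ≫ b = f.f₀ - g.f₀ := Abelian.monoLift_comp b _ hz
  refine ⟨Abelian.monoLift b _ hz, ?_, hα.symm⟩
  rw [← cancel_mono b, Preadditive.sub_comp, ← f.comm, ← g.comm, Category.assoc, hα,
    Preadditive.comp_sub]

end Cokernel

noncomputable def DiscObj.ofProjectivePresentation {X : C} (P : ProjectivePresentation X) :
    DiscObj C :=
  ⟨kernel P.f, P.p, kernel.ι P.f, inferInstance, inferInstance⟩

noncomputable def CategoryTheory.ProjectivePresentation.cokernelKernelιIso {X : C}
    (P : ProjectivePresentation X) : cokernel (kernel.ι P.f) ≅ X :=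
  (colimit.isColimit _).coconePointUniqueUpToIso
    (Abelian.epiIsCokernelOfKernel _ (kernelIsKernel P.f))

namespace discCokernelFunctor

instance full : (discCokernelFunctor (C := C)).Full where
  map_surjective {X Y} φ := by
    have := X.proj
    have := Y.mono
    obtain ⟨f, hf⟩ := ArrowMor.exists_cokerMap_eq φ
    exact ⟨Quot.mk _ f, hf⟩

instance faithful : (discCokernelFunctor (C := C)).Faithful where
  map_injective {X Y} f g h := by
    have := Y.mono
    induction f using Quot.ind
    induction g using Quot.ind
    exact Quot.sound (homotopic_of_cokerMap_eq h)

instance essSurj [EnoughProjectives C] : (discCokernelFunctor (C := C)).EssSurj where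
  mem_essImage X :=
    let P := (EnoughProjectives.presentation X).some
    ⟨.ofProjectivePresentation P, ⟨P.cokernelKernelιIso⟩⟩

end discCokernelFunctor

/-- For an abelian category `𝒜` with enough projectives, the functor
`𝒟 ⥤ 𝒜`, `a ↦ coker a`, from the category of monomorphisms with projective codomain
and homotopy classes of morphisms of arrows, is an equivalence of categories. -/
theorem discCokernelFunctor_isEquivalence [EnoughProjectives C] :
    (discCokernelFunctor (C := C)).IsEquivalence :=
  { }
end

section
/- Let 𝒜 be an abelian category with enough projectives. Let 𝒞 be the category whose objects are epimorphisms a : A₁ → A₀ of 𝒜 with A₀ projective, and whose morphisms from a to b are homotopy classes of morphisms a → b of the arrow 2-category 𝒜^[1]. Then the functor 𝒞 → 𝒜 sending a to ker a (and a homotopy class of (f₀,f₁) to the induced morphism ker a → ker b) is an equivalence of categories. -/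
open CategoryTheory CategoryTheory.Limits

universe v u

variable (C : Type u) [Category.{v} C] [Abelian C]

/-- The objects of the category `𝒞`: epimorphisms `a : A₁ ⟶ A₀` of `𝒜`
with `A₀` projective (the codiscrete objects of `𝒜^[1]_c`). -/
structure CodiscObj where
  A₁ : C
  A₀ : C
  a : A₁ ⟶ A₀
  epi : Epi a
  proj : Projective A₀

variable {C}

/-- The category `𝒞`: morphisms are homotopy classes of morphisms of arrows. -/
instance : Category (CodiscObj C) where
  Hom X Y := Quot (Homotopic X.a Y.a)
  id X := Quot.mk _ (ArrowMor.id X.a)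
  comp {X Y Z} f g :=
    Quot.map₂ ArrowMor.comp (fun f _ _ h => h.comp_left f) (fun _ _ g h => h.comp_right g) f g
  id_comp f := by
    induction f using Quot.ind
    exact congrArg (Quot.mk _) (ArrowMor.id_comp' _)
  comp_id f := by
    induction f using Quot.ind
    exact congrArg (Quot.mk _) (ArrowMor.comp_id' _)
  assoc f g h := by
    induction f using Quot.ind
    induction g using Quot.ind
    induction h using Quot.ind
    exact congrArg (Quot.mk _) (ArrowMor.comp_assoc' _ _ _)

theorem kerMap_congr {A₁ A₀ B₁ B₀ : C} {a : A₁ ⟶ A₀} {b : B₁ ⟶ B₀}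
    {f g : ArrowMor a b} (h : Homotopic a b f g) : f.kerMap = g.kerMap := by
  obtain ⟨α, h₁, h₀⟩ := h
  rw [← cancel_mono (kernel.ι b)]
  simp only [ArrowMor.kerMap, kernel.lift_ι]
  rw [← sub_eq_zero, ← Preadditive.comp_sub, h₁, ← Category.assoc, kernel.condition,
    zero_comp]

/-- The functor `𝒞 ⥤ 𝒜` sending `a` to `ker a` and the homotopy class of `(f₀,f₁)`
to the induced morphism `ker a ⟶ ker b`. -/
noncomputable def codiscKernelFunctor : CodiscObj C ⥤ C where
  obj X := kernel X.a
  map {X Y} f := Quot.lift ArrowMor.kerMap (fun _ _ h => kerMap_congr h) f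
  map_id X := by
    show (ArrowMor.id X.a).kerMap = 𝟙 _
    refine equalizer.hom_ext ?_
    simp [ArrowMor.id, ArrowMor.kerMap]
  map_comp {X Y Z} f g := by
    obtain ⟨f⟩ := f
    obtain ⟨g⟩ := g
    show (f.comp g).kerMap = f.kerMap ≫ g.kerMap
    refine equalizer.hom_ext ?_
    simp [ArrowMor.comp, ArrowMor.kerMap]


/-! Since `A₀` is projective, the epimorphism `a` splits, so `ker a` is a retract `r` of `A₁` and
every `φ : ker a ⟶ ker b` is induced by `(0, r ≫ φ ≫ ι)`. If `f` and `g` induce the same map on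
kernels, then `f₁ - g₁` vanishes on `ker a`, so it factors through `a = coker (ker a)`, and the
factorization is a homotopy from `f` to `g`. Every object `Y` is the kernel of `Y ⟶ 0`. -/

section Splitting

variable {𝒜 : Type*} [Category 𝒜]

theorem isSplitEpi_of_epi_of_projective {A₁ A₀ : 𝒜} (a : A₁ ⟶ A₀) [Epi a] [Projective A₀] :
    IsSplitEpi a :=
  IsSplitEpi.mk' ⟨Projective.factorThru (𝟙 A₀) a, Projective.factorThru_comp _ _⟩

instance isSplitMono_kernel_ι_of_isSplitEpi [Preadditive 𝒜] {A₁ A₀ : 𝒜} (a : A₁ ⟶ A₀)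
    [HasKernel a] [IsSplitEpi a] : IsSplitMono (kernel.ι a) :=
  IsSplitMono.mk' ⟨kernel.lift a (𝟙 A₁ - a ≫ section_ a) (by simp), by ext; simp⟩

end Splitting

namespace ArrowMor

variable {A₁ A₀ B₁ B₀ : C} {a : A₁ ⟶ A₀} {b : B₁ ⟶ B₀}

noncomputable def ofKernelHom [IsSplitMono (kernel.ι a)] (φ : kernel a ⟶ kernel b) :
    ArrowMor a b :=
  ⟨0, retraction (kernel.ι a) ≫ φ ≫ kernel.ι b, by simp⟩

@[simp]
theorem kerMap_ofKernelHom [IsSplitMono (kernel.ι a)] (φ : kernel a ⟶ kernel b) :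
    (ofKernelHom φ).kerMap = φ := by
  ext
  simp [ofKernelHom]

theorem homotopic_of_kerMap_eq [Epi a] {f g : ArrowMor a b} (h : f.kerMap = g.kerMap) :
    Homotopic a b f g := by
  have hk : kernel.ι a ≫ (f.f₁ - g.f₁) = 0 := by
    have h_ι := congrArg (· ≫ kernel.ι b) h
    simp only [kernel.lift_ι] at h_ι
    rw [Preadditive.comp_sub, h_ι, sub_self]
  refine ⟨Abelian.epiDesc a (f.f₁ - g.f₁) hk, (Abelian.comp_epiDesc a _ hk).symm, ?_⟩
  rw [← cancel_epi a, reassoc_of% Abelian.comp_epiDesc a _ hk, Preadditive.comp_sub,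
    Preadditive.sub_comp, f.comm, g.comm]

end ArrowMor

open ZeroObject in
noncomputable def CodiscObj.toZero (Y : C) : CodiscObj C :=
  ⟨Y, 0, 0, epi_of_target_iso_zero _ (Iso.refl _), Projective.zero_projective⟩

instance : (codiscKernelFunctor (C := C)).Full where
  map_surjective {X _} φ := by
    have := X.epi
    have := X.proj
    have := isSplitEpi_of_epi_of_projective X.a
    exact ⟨Quot.mk _ (ArrowMor.ofKernelHom φ), ArrowMor.kerMap_ofKernelHom φ⟩

instance : (codiscKernelFunctor (C := C)).Faithful where
  map_injective {X _} f g h := by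
    have := X.epi
    induction f using Quot.ind
    induction g using Quot.ind
    exact Quot.sound (ArrowMor.homotopic_of_kerMap_eq h)

instance : (codiscKernelFunctor (C := C)).EssSurj where
  mem_essImage Y := ⟨CodiscObj.toZero Y, ⟨kernelZeroIsoSource⟩⟩

theorem codiscKernelFunctor_isEquivalence_general :
    (codiscKernelFunctor (C := C)).IsEquivalence :=
  {}

/-- For an abelian category `𝒜` with enough projectives, the functor
`𝒞 ⥤ 𝒜`, `a ↦ ker a`, from the category of epimorphisms with projective codomain
and homotopy classes of morphisms of arrows, is an equivalence of categories. -/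
theorem codiscKernelFunctor_isEquivalence [EnoughProjectives C] :
    (codiscKernelFunctor (C := C)).IsEquivalence :=
  codiscKernelFunctor_isEquivalence_general
end

section
/- Let 𝒜 be an abelian category, let x : X₁ → X₀ be a morphism of 𝒜, let ε₀ : P₀ → X₀ be an epimorphism, and form the pullback square with P₁ = P₀ ×_{X₀} X₁, projections p : P₁ → P₀ and ε₁ : P₁ → X₁. Then the morphism (ε₀, ε₁) : p → x of the arrow category induces an isomorphism ker p → ker x and an isomorphism coker p → coker x. -/
open CategoryTheory CategoryTheory.Limits

universe v u

variable {C : Type u} [Category.{v} C] [Abelian C]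

section CokernelOfPullback

variable {X₁ X₂ X₃ X₄ : C} {t : X₁ ⟶ X₂} {l : X₁ ⟶ X₃} {r : X₂ ⟶ X₄} {b : X₃ ⟶ X₄}

lemma isIso_cokernel_map_of_isPullback_of_epi (sq : IsPullback t l r b) [Epi r] :
    IsIso (cokernel.map _ _ _ _ sq.w) := by
  have := Abelian.mono_cokernel_map_of_isPullback sq
  have : Epi (cokernel.map _ _ _ _ sq.w) := epi_of_epi_fac (cokernel.π_desc _ _ _)
  exact isIso_of_mono_of_epi _

end CokernelOfPullback

/-- Let `𝒜` be abelian, `x : X₁ ⟶ X₀`, `ε₀ : P₀ ⟶ X₀` an epimorphism,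
and form the pullback `P₁ = P₀ ×_{X₀} X₁` with projections `p : P₁ ⟶ P₀` and
`ε₁ : P₁ ⟶ X₁`.  Then `(ε₀, ε₁) : p ⟶ x` induces an isomorphism `ker p ⟶ ker x`
and an isomorphism `coker p ⟶ coker x`. -/
theorem replacement_kerMap_cokerMap_isIso {X₁ X₀ P₀ : C}
    (x : X₁ ⟶ X₀) (ε₀ : P₀ ⟶ X₀) [Epi ε₀] :
    IsIso (kernel.map (pullback.fst ε₀ x) x (pullback.snd ε₀ x) ε₀ pullback.condition) ∧
    IsIso (cokernel.map (pullback.fst ε₀ x) x (pullback.snd ε₀ x) ε₀ pullback.condition) := by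
  have sq := IsPullback.of_hasPullback ε₀ x
  exact ⟨isIso_kernel_map_of_isPullback sq, isIso_cokernel_map_of_isPullback_of_epi sq⟩
end

section
/- Let 𝒜 be an abelian category, let a : A₁ → A₀ with A₀ projective, let x : X₁ → X₀, and let (f₀,f₁) : a → x be a morphism of arrows inducing isomorphisms ker a → ker x and coker a → coker x. Let ε₀ : P₀ → X₀ be an epimorphism and let p : P₁ → P₀ be the pullback of x along ε₀, with ε₁ : P₁ → X₁ the other projection. Then there exists a morphism of arrows (g₀,g₁) : a → p with ε₀ ∘ g₀ = f₀ and ε₁ ∘ g₁ = f₁; moreover, for any two such lifts (g₀,g₁) and (g'₀,g'₁) there is a unique homotopy α : A₀ → P₁ from (g₀,g₁) to (g'₀,g'₁) satisfying ε₁ ∘ α = 0. -/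
open CategoryTheory CategoryTheory.Limits

universe v u

/-!
A lift `(g₀, g₁)` of `(f₀, f₁)` is fixed by a factorization `g₀` of `f₀` through the epimorphism
`ε₀`, which exists because `A₀` is projective; `g₁` is then forced by the universal property of
the pullback. Two lifts have `(g₀ - g'₀) ≫ ε₀ = 0`, so `g₀ - g'₀` factors through `P₁` with zero
`ε₁`-component, and the homotopies `α` with `α ≫ ε₁ = 0` are exactly such factorizations.
-/

section PullbackReplacement

variable {C : Type u} [Category.{v} C] {A₁ A₀ X₁ X₀ P₀ : C}
  {a : A₁ ⟶ A₀} {x : X₁ ⟶ X₀} {ε₀ : P₀ ⟶ X₀} [HasPullback ε₀ x]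

noncomputable def ArrowMor.liftToPullbackFst (f : ArrowMor a x) (g₀ : A₀ ⟶ P₀)
    (hg₀ : g₀ ≫ ε₀ = f.f₀) : ArrowMor a (pullback.fst ε₀ x) :=
  ⟨g₀, pullback.lift (a ≫ g₀) f.f₁ (by rw [Category.assoc, hg₀, f.comm]), by
    rw [pullback.lift_fst]⟩

@[simp]
theorem ArrowMor.liftToPullbackFst_f₁_snd (f : ArrowMor a x) (g₀ : A₀ ⟶ P₀)
    (hg₀ : g₀ ≫ ε₀ = f.f₀) : (f.liftToPullbackFst g₀ hg₀).f₁ ≫ pullback.snd ε₀ x = f.f₁ :=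
  pullback.lift_snd _ _ _

theorem ArrowMor.exists_lift_to_pullbackFst [Projective A₀] [Epi ε₀] (f : ArrowMor a x) :
    ∃ g : ArrowMor a (pullback.fst ε₀ x),
      g.f₀ ≫ ε₀ = f.f₀ ∧ g.f₁ ≫ pullback.snd ε₀ x = f.f₁ := by
  obtain ⟨g₀, hg₀⟩ := Projective.factors f.f₀ ε₀
  exact ⟨f.liftToPullbackFst g₀ hg₀, hg₀, f.liftToPullbackFst_f₁_snd g₀ hg₀⟩

variable [Preadditive C] {g g' : ArrowMor a (pullback.fst ε₀ x)} {α : A₀ ⟶ pullback ε₀ x}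

theorem isHomotopy_iff_comp_fst_of_comp_snd_eq_zero
    (h₁ : g.f₁ ≫ pullback.snd ε₀ x = g'.f₁ ≫ pullback.snd ε₀ x)
    (hα : α ≫ pullback.snd ε₀ x = 0) :
    IsHomotopy g g' α ↔ α ≫ pullback.fst ε₀ x = g.f₀ - g'.f₀ := by
  refine ⟨fun h ↦ h.2.symm, fun h ↦ ⟨?_, h.symm⟩⟩
  apply pullback.hom_ext
  · rw [Preadditive.sub_comp, ← g.comm, ← g'.comm, Category.assoc, h, Preadditive.comp_sub]
  · rw [Preadditive.sub_comp, h₁, sub_self, Category.assoc, hα, comp_zero]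

theorem existsUnique_isHomotopy_comp_snd_eq_zero
    (h₀ : g.f₀ ≫ ε₀ = g'.f₀ ≫ ε₀)
    (h₁ : g.f₁ ≫ pullback.snd ε₀ x = g'.f₁ ≫ pullback.snd ε₀ x) :
    ∃! α : A₀ ⟶ pullback ε₀ x, IsHomotopy g g' α ∧ α ≫ pullback.snd ε₀ x = 0 := by
  have hdiff : (g.f₀ - g'.f₀) ≫ ε₀ = 0 ≫ x := by
    rw [Preadditive.sub_comp, h₀, sub_self, zero_comp]
  refine ⟨pullback.lift _ _ hdiff, ⟨?_, pullback.lift_snd _ _ _⟩, ?_⟩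
  · exact (isHomotopy_iff_comp_fst_of_comp_snd_eq_zero h₁ (pullback.lift_snd _ _ _)).2
      (pullback.lift_fst _ _ _)
  · rintro β ⟨hβ, hβ_snd⟩
    apply pullback.hom_ext
    · rw [(isHomotopy_iff_comp_fst_of_comp_snd_eq_zero h₁ hβ_snd).1 hβ, pullback.lift_fst]
    · rw [hβ_snd, pullback.lift_snd]

end PullbackReplacement

variable {C : Type u} [Category.{v} C] [Abelian C]

theorem replacement_lift_exists_unique_general {A₁ A₀ X₁ X₀ P₀ : C}
    (a : A₁ ⟶ A₀) [Projective A₀] (x : X₁ ⟶ X₀) (f : ArrowMor a x)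
    (ε₀ : P₀ ⟶ X₀) [Epi ε₀] :
    (∃ g : ArrowMor a (pullback.fst ε₀ x),
      g.f₀ ≫ ε₀ = f.f₀ ∧ g.f₁ ≫ pullback.snd ε₀ x = f.f₁) ∧
    (∀ g g' : ArrowMor a (pullback.fst ε₀ x),
      (g.f₀ ≫ ε₀ = f.f₀ ∧ g.f₁ ≫ pullback.snd ε₀ x = f.f₁) →
      (g'.f₀ ≫ ε₀ = f.f₀ ∧ g'.f₁ ≫ pullback.snd ε₀ x = f.f₁) →
      ∃! α : A₀ ⟶ pullback ε₀ x,
        IsHomotopy g g' α ∧ α ≫ pullback.snd ε₀ x = 0) :=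
  ⟨f.exists_lift_to_pullbackFst, fun _ _ hg hg' ↦
    existsUnique_isHomotopy_comp_snd_eq_zero (hg.1.trans hg'.1.symm) (hg.2.trans hg'.2.symm)⟩

/-- Let `𝒜` be abelian, `a : A₁ ⟶ A₀` with `A₀` projective,
`x : X₁ ⟶ X₀`, and `(f₀,f₁) : a ⟶ x` a morphism of arrows inducing isomorphisms on
kernels and cokernels.  Let `ε₀ : P₀ ⟶ X₀` be an epimorphism and `p : P₁ ⟶ P₀` the
pullback of `x` along `ε₀`, with other projection `ε₁ : P₁ ⟶ X₁`.  Then `(f₀,f₁)` lifts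
to a morphism `(g₀,g₁) : a ⟶ p`, and any two such lifts are related by a unique homotopy
`α` with `ε₁ ∘ α = 0`. -/
theorem replacement_lift_exists_unique {A₁ A₀ X₁ X₀ P₀ : C}
    (a : A₁ ⟶ A₀) [Projective A₀] (x : X₁ ⟶ X₀) (f : ArrowMor a x)
    (hker : IsIso f.kerMap) (hcoker : IsIso f.cokerMap)
    (ε₀ : P₀ ⟶ X₀) [Epi ε₀] :
    (∃ g : ArrowMor a (pullback.fst ε₀ x),
      g.f₀ ≫ ε₀ = f.f₀ ∧ g.f₁ ≫ pullback.snd ε₀ x = f.f₁) ∧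
    (∀ g g' : ArrowMor a (pullback.fst ε₀ x),
      (g.f₀ ≫ ε₀ = f.f₀ ∧ g.f₁ ≫ pullback.snd ε₀ x = f.f₁) →
      (g'.f₀ ≫ ε₀ = f.f₀ ∧ g'.f₁ ≫ pullback.snd ε₀ x = f.f₁) →
      ∃! α : A₀ ⟶ pullback ε₀ x,
        IsHomotopy g g' α ∧ α ≫ pullback.snd ε₀ x = 0) :=
  replacement_lift_exists_unique_general a x f ε₀
end

section
/- Let 𝒜 be an abelian category and let (f₀,f₁) : a → b be a morphism of arrows, with a : A₁ → A₀ and b : B₁ → B₀. Let Q be the pushout of f₁ : A₁ → B₁ along a : A₁ → A₀, with structure maps q : B₁ → Q and ξ : A₀ → Q, and let q' : Q → B₀ be the morphism induced by b : B₁ → B₀ and f₀ : A₀ → B₀. Then (id_{B₀}, q) : b → q' is a morphism of arrows, ξ is a homotopy from the composite (id_{B₀}, q) ∘ (f₀, f₁) to the zero morphism a → q', and for every arrow c : C₁ → C₀, every morphism (u₀,u₁) : b → c and every homotopy φ : A₀ → C₁ from (u₀,u₁) ∘ (f₀,f₁) to zero, there exists a unique morphism v₁ : Q → C₁ with v₁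 ∘ q = u₁ and v₁ ∘ ξ = φ, and (u₀, v₁) : q' → c is a morphism of arrows with (u₀, v₁) ∘ (id_{B₀}, q) = (u₀, u₁). -/
open CategoryTheory CategoryTheory.Limits

universe v u

/-! A homotopy `φ` from `(u₀,u₁) ∘ (f₀,f₁)` to zero amounts to the two equations
`a ≫ φ = f₁ ≫ u₁` and `f₀ ≫ u₀ = φ ≫ c`. The first makes `(φ, u₁)` a cocone on the span
`(a, f₁)`, so the universal property of the 2-cokernel is that of the pushout `Q`; the second,
tested on the two injections of `Q`, makes `(u₀, v₁)` a morphism of arrows `q' ⟶ c`. -/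

theorem CategoryTheory.Limits.pushout.existsUnique_desc {C : Type u} [Category.{v} C]
    {X Y Z W : C} {f : X ⟶ Y} {g : X ⟶ Z} [HasPushout f g] (h : Y ⟶ W) (k : Z ⟶ W)
    (w : f ≫ h = g ≫ k) :
    ∃! l : pushout f g ⟶ W, pushout.inl f g ≫ l = h ∧ pushout.inr f g ≫ l = k :=
  ⟨pushout.desc h k w, ⟨pushout.inl_desc h k w, pushout.inr_desc h k w⟩,
    fun _ ⟨hl, hr⟩ => pushout.hom_ext (hl.trans (pushout.inl_desc h k w).symm)
      (hr.trans (pushout.inr_desc h k w).symm)⟩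

theorem isHomotopy_zero_iff {C : Type u} [Category.{v} C] [Preadditive C] {A₁ A₀ B₁ B₀ : C}
    {a : A₁ ⟶ A₀} {b : B₁ ⟶ B₀} (g : ArrowMor a b) (α : A₀ ⟶ B₁) :
    IsHomotopy g ⟨0, 0, by simp⟩ α ↔ g.f₁ = a ≫ α ∧ g.f₀ = α ≫ b := by
  simp only [IsHomotopy, sub_zero]

namespace ArrowMor

variable {C : Type u} [Category.{v} C] {A₁ A₀ B₁ B₀ C₁ C₀ : C}
  {a : A₁ ⟶ A₀} {b : B₁ ⟶ B₀} (f : ArrowMor a b) [HasPushout a f.f₁]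

/-- The arrow `q' : Q ⟶ B₀` of the 2-cokernel, `Q` being the pushout of `f₁` along `a`. -/
noncomputable abbrev twoCokernel : pushout a f.f₁ ⟶ B₀ :=
  pushout.desc f.f₀ b f.comm

noncomputable abbrev twoCokernelπ : ArrowMor b f.twoCokernel :=
  ⟨𝟙 B₀, pushout.inr a f.f₁, by rw [Category.comp_id]; exact (pushout.inr_desc ..).symm⟩

theorem isHomotopy_comp_twoCokernelπ [Preadditive C] :
    IsHomotopy (f.comp f.twoCokernelπ) ⟨0, 0, by simp⟩ (pushout.inl a f.f₁) :=
  (isHomotopy_zero_iff _ _).2 ⟨pushout.condition.symm, (Category.comp_id _).trans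
    (pushout.inl_desc ..).symm⟩

theorem twoCokernel_comp {c : C₁ ⟶ C₀} (u : ArrowMor b c) {φ : A₀ ⟶ C₁}
    (hφ : f.f₀ ≫ u.f₀ = φ ≫ c) {v₁ : pushout a f.f₁ ⟶ C₁}
    (hinr : pushout.inr a f.f₁ ≫ v₁ = u.f₁) (hinl : pushout.inl a f.f₁ ≫ v₁ = φ) :
    f.twoCokernel ≫ u.f₀ = v₁ ≫ c := by
  apply pushout.hom_ext
  · rw [pushout.inl_desc_assoc, ← Category.assoc, hinl, hφ]
  · rw [pushout.inr_desc_assoc, ← Category.assoc, hinr, u.comm]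

theorem twoCokernelπ_comp {c : C₁ ⟶ C₀} (u : ArrowMor b c) {v₁ : pushout a f.f₁ ⟶ C₁}
    (hv₁ : pushout.inr a f.f₁ ≫ v₁ = u.f₁) (hcomm : f.twoCokernel ≫ u.f₀ = v₁ ≫ c) :
    f.twoCokernelπ.comp ⟨u.f₀, v₁, hcomm⟩ = u :=
  ext' (Category.id_comp _) hv₁

end ArrowMor

variable {C : Type u} [Category.{v} C] [Abelian C]

/-- the 2-cokernel in `𝒜^[1]`.  Let `(f₀,f₁) : a ⟶ b` be a morphism of
arrows, `Q` the pushout of `f₁` along `a` with structure maps `q = inr : B₁ ⟶ Q` and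
`ξ = inl : A₀ ⟶ Q`, and `q' : Q ⟶ B₀` induced by `b` and `f₀`.  Then `(𝟙_{B₀}, q) : b ⟶ q'`
is a morphism of arrows, `ξ` is a homotopy from `(𝟙,q) ∘ (f₀,f₁)` to zero, and for every
arrow `c`, morphism `(u₀,u₁) : b ⟶ c` and homotopy `φ` from `(u₀,u₁) ∘ (f₀,f₁)` to zero
there is a unique `v₁ : Q ⟶ C₁` with `v₁ ∘ q = u₁` and `v₁ ∘ ξ = φ`; moreover `(u₀,v₁)`
is a morphism of arrows `q' ⟶ c` with `(u₀,v₁) ∘ (𝟙,q) = (u₀,u₁)`. -/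
theorem twoCokernel_spec {A₁ A₀ B₁ B₀ : C} (a : A₁ ⟶ A₀) (b : B₁ ⟶ B₀)
    (f : ArrowMor a b) :
    (b ≫ 𝟙 B₀ = pushout.inr a f.f₁ ≫ pushout.desc f.f₀ b f.comm) ∧
    IsHomotopy
      (f.comp (⟨𝟙 B₀, pushout.inr a f.f₁, by rw [Category.comp_id]; exact (pushout.inr_desc ..).symm⟩ :
        ArrowMor b (pushout.desc f.f₀ b f.comm)))
      (⟨0, 0, by simp⟩ : ArrowMor a (pushout.desc f.f₀ b f.comm))
      (pushout.inl a f.f₁) ∧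
    ∀ (C₁ C₀ : C) (c : C₁ ⟶ C₀) (u : ArrowMor b c) (φ : A₀ ⟶ C₁),
      IsHomotopy (f.comp u) (⟨0, 0, by simp⟩ : ArrowMor a c) φ →
      (∃! v₁ : pushout a f.f₁ ⟶ C₁,
        pushout.inr a f.f₁ ≫ v₁ = u.f₁ ∧ pushout.inl a f.f₁ ≫ v₁ = φ) ∧
      ∀ v₁ : pushout a f.f₁ ⟶ C₁,
        (pushout.inr a f.f₁ ≫ v₁ = u.f₁ ∧ pushout.inl a f.f₁ ≫ v₁ = φ) →
        ∃ hcomm : pushout.desc f.f₀ b f.comm ≫ u.f₀ = v₁ ≫ c,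
          ArrowMor.comp
            (⟨𝟙 B₀, pushout.inr a f.f₁, by rw [Category.comp_id]; exact (pushout.inr_desc ..).symm⟩ :
              ArrowMor b (pushout.desc f.f₀ b f.comm))
            (⟨u.f₀, v₁, hcomm⟩ : ArrowMor (pushout.desc f.f₀ b f.comm) c) = u := by
  refine ⟨f.twoCokernelπ.comm, f.isHomotopy_comp_twoCokernelπ, fun C₁ C₀ c u φ hφ => ?_⟩
  obtain ⟨hφ₁, hφ₀⟩ := (isHomotopy_zero_iff _ _).1 hφ
  refine ⟨?_, fun v₁ hv₁ =>
    ⟨f.twoCokernel_comp u hφ₀ hv₁.1 hv₁.2, f.twoCokernelπ_comp u hv₁.1 _⟩⟩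
  simpa only [and_comm] using pushout.existsUnique_desc φ u.f₁ hφ₁.symm
end
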